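/- arXiv:1411.6060 — 5 statements merged into one kernel-verified Lean document; each statement's English description precedes it below -/
import Mathlib

section
/- Let A > 1, K_2 ∈ (0,1), K_1 > 1, and n, m nonnegative integers. With T = (a_1(1+K_1+K_2)+(a_2-a_1)K_2)/(1+(m+1)K_2+n(1+K_1+K_2)) and θ = (a_2-a_1)/T - m, the inequality θ > K_2/(K_1+K_2-1) holds if and only if G_{nm}(K_1) < 0, where G_{nm}(K_1) = [m-n(A-1)]((K_1+K_2)^2-1) - K_1[(A-1)(1+K_2)-K_2] + K_2(1+K_2) + (A-1). -/
theorem stmt_1 (a1 a2 A K1 K2 : ℝ) (n m : ℕ)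
    (hA : 1 < A) (hK2 : 0 < K2) (hK2' : K2 < 1) (hK1 : 1 < K1)
    (ha1 : 0 < a1) (ha2 : a2 = A * a1)
    (hden : 0 < 1 + ((m : ℝ) + 1) * K2 + (n : ℝ) * (1 + K1 + K2))
    (T θ G : ℝ)
    (hT : T = (a1 * (1 + K1 + K2) + (a2 - a1) * K2) /
      (1 + ((m : ℝ) + 1) * K2 + (n : ℝ) * (1 + K1 + K2)))
    (hTpos : 0 < T)
    (hθ : θ = (a2 - a1) / T - m)
    (hG : G = ((m : ℝ) - (n : ℝ) * (A - 1)) * ((K1 + K2) ^ 2 - 1)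
      - K1 * ((A - 1) * (1 + K2) - K2) + K2 * (1 + K2) + (A - 1)) :
    θ > K2 / (K1 + K2 - 1) ↔ G < 0 := by
  set D : ℝ := 1 + ((m : ℝ) + 1) * K2 + (n : ℝ) * (1 + K1 + K2) with hD
  set N : ℝ := a1 * (1 + K1 + K2) + (a2 - a1) * K2 with hN
  have hK : (0:ℝ) < K1 + K2 - 1 := by linarith
  have hNpos : 0 < N := by
    have : N = T * D := by
      rw [hT]; field_simp
    rw [this]; exact mul_pos hTpos hden
  have hDne : D ≠ 0 := ne_of_gt hden
  have hNne : N ≠ 0 := ne_of_gt hNpos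
  have hθ' : θ = ((a2 - a1) * D - (m : ℝ) * N) / N := by
    rw [hθ, hT]
    field_simp
  have key : ((a2 - a1) * D - (m : ℝ) * N) * (K1 + K2 - 1) - K2 * N = a1 * (-G) := by
    rw [hN, hD, hG, ha2]; ring
  rw [gt_iff_lt, div_lt_iff₀ hK, hθ', div_mul_eq_mul_div, lt_div_iff₀ hNpos]
  constructor
  · intro h
    by_contra hc
    push_neg at hc
    nlinarith [mul_nonneg ha1.le hc]
  · intro h
    have : 0 < a1 * (-G) := mul_pos ha1 (by linarith)
    linarith
end

section
/- Let A > 1, K_2 ∈ (0,1), n ∈ ℕ, and let m > n(A-1) be a real number. Define L_{nm-1} = (A-1)/(m-n(A-1)) - (1+K_2) and G_{nm}(K) = [m-n(A-1)](( K+K_2)^2-1) - K[(A-1)(1+K_2)-K_2] + K_2(1+K_2) + (A-1). Then G_{nm}(L_{nm-1}) = K_2(A-1)[2+K_2 - (A-2)/(m-n(A-1))]. In particular, if m < m*(n) + (1+K_2)/(2+K_2) where m*(n) = n(A-1)+(A-3-K_2)/(2+K_2), then G_{nm}(L_{nm-1}) < 0. -/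
theorem stmt_4 (A K2 : ℝ) (n : ℕ) (m : ℝ)
    (hA : 1 < A) (hK2 : 0 < K2) (hK2' : K2 < 1)
    (hm : (n : ℝ) * (A - 1) < m)
    (L : ℝ) (G : ℝ → ℝ)
    (hL : L = (A - 1) / (m - (n : ℝ) * (A - 1)) - (1 + K2))
    (hG : ∀ K : ℝ, G K = (m - (n : ℝ) * (A - 1)) * ((K + K2) ^ 2 - 1)
      - K * ((A - 1) * (1 + K2) - K2) + K2 * (1 + K2) + (A - 1)) :
    G L = K2 * (A - 1) * (2 + K2 - (A - 2) / (m - (n : ℝ) * (A - 1))) ∧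
    (2 < A →
      m < (n : ℝ) * (A - 1) + (A - 3 - K2) / (2 + K2) + (1 + K2) / (2 + K2) →
      G L < 0) := by
  set d : ℝ := m - (n : ℝ) * (A - 1) with hd
  have hdpos : 0 < d := by simp [hd]; linarith
  have hdne : d ≠ 0 := ne_of_gt hdpos
  have key : G L = K2 * (A - 1) * (2 + K2 - (A - 2) / d) := by
    rw [hG, hL]
    field_simp
    ring
  refine ⟨key, fun hA2 hmlt => ?_⟩
  rw [key]
  have h2K2 : (0:ℝ) < 2 + K2 := by linarith
  have hdlt : d < (A - 2) / (2 + K2) := by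
    have : m - (n : ℝ) * (A - 1) < (A - 3 - K2 + (1 + K2)) / (2 + K2) := by
      rw [add_div]; linarith
    have h3 : A - 3 - K2 + (1 + K2) = A - 2 := by ring
    rw [h3] at this
    exact this
  have hbr : 2 + K2 - (A - 2) / d < 0 := by
    have h1 : d * (2 + K2) < A - 2 := (lt_div_iff₀ h2K2).mp hdlt
    have : 2 + K2 < (A - 2) / d := by
      rw [lt_div_iff₀ hdpos]; nlinarith
    linarith
  have : 0 < K2 * (A - 1) := mul_pos hK2 (by linarith)
  exact mul_neg_of_pos_of_neg this hbr
end

section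
/- With α > 0, K_2 ∈ (0,1), A > 1 and β = (A-1)(1+K_2)-K_2 > 0, the function g(α) = -(1/α)(β/2 - α(1+K_2))^2 + K_2[(1+α)(2+K_2)-(A-1)] is strictly monotonically increasing on the interval (0, β/(2(1+K_2))], tends to -∞ as α → 0+, and is positive at α = β/(2(1+K_2)). -/
theorem stmt_10 (A K2 β : ℝ)
    (hK2 : 0 < K2) (hK2' : K2 < 1) (hA : 1 < A)
    (hβ : β = (A - 1) * (1 + K2) - K2) (hβpos : 0 < β)
    (g : ℝ → ℝ)
    (hg : ∀ α : ℝ, g α = -(1 / α) * (β / 2 - α * (1 + K2)) ^ 2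
      + K2 * ((1 + α) * (2 + K2) - (A - 1))) :
    StrictMonoOn g (Set.Ioc 0 (β / (2 * (1 + K2)))) ∧
    Filter.Tendsto g (nhdsWithin 0 (Set.Ioi 0)) Filter.atBot ∧
    0 < g (β / (2 * (1 + K2))) := by
  have hc : (0:ℝ) < 1 + K2 := by linarith
  set C : ℝ := β * (1 + K2) + K2 * ((2 + K2) - (A - 1)) with hC
  have key : ∀ z : ℝ, z ≠ 0 → g z = -β^2/(4*z) - z + C := by
    intro z hz
    rw [hg]
    field_simp
    ring
  refine ⟨?_, ?_, ?_⟩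
  · intro x hx y hy hxy
    have hx0 : 0 < x := hx.1
    have hy0 : 0 < y := hy.1
    have hy2 : y * (2 * (1 + K2)) ≤ β := (le_div_iff₀ (by positivity)).mp hy.2
    have hsq : (y * (2 * (1 + K2))) ^ 2 ≤ β ^ 2 := pow_le_pow_left₀ (by positivity) hy2 2
    have h4 : 4 * (x * y) < β ^ 2 := by
      nlinarith [mul_pos hy0 (sub_pos.mpr hxy), mul_pos (mul_pos hy0 hy0) hK2,
        mul_pos (mul_pos hy0 hy0) (mul_pos hK2 hK2)]
    rw [key x hx0.ne', key y hy0.ne']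
    have hd : -β^2/(4*y) - y + C - (-β^2/(4*x) - x + C)
        = (y - x) * (β^2/(4*(x*y)) - 1) := by
      field_simp
      ring
    have h1 : 1 < β^2/(4*(x*y)) := (one_lt_div (by positivity)).mpr h4
    nlinarith [mul_pos (sub_pos.mpr hxy) (sub_pos.mpr h1)]
  · have hinv : Filter.Tendsto (fun z : ℝ => z⁻¹)
        (nhdsWithin 0 (Set.Ioi 0)) Filter.atTop := tendsto_inv_nhdsGT_zero
    have ht : Filter.Tendsto (fun z : ℝ => -(β^2/4 * z⁻¹))
        (nhdsWithin 0 (Set.Ioi 0)) Filter.atBot :=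
      Filter.tendsto_neg_atBot_iff.mpr
        (hinv.const_mul_atTop (show (0:ℝ) < β^2/4 by positivity))
    have hrest : Filter.Tendsto (fun z : ℝ => -z + C)
        (nhdsWithin 0 (Set.Ioi 0)) (nhds (-(0:ℝ) + C)) := by
      apply Filter.Tendsto.mono_left _ nhdsWithin_le_nhds
      exact (continuous_neg.add continuous_const).tendsto 0
    have h1 := ht.atBot_add hrest
    refine h1.congr' ?_
    filter_upwards [self_mem_nhdsWithin] with z hz
    have hzne : z ≠ 0 := ne_of_gt hz
    rw [key z hzne]
    field_simp
    ring
  · have hα : (0:ℝ) < β / (2 * (1 + K2)) := by positivity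
    rw [hg]
    have hz : β / 2 - β / (2 * (1 + K2)) * (1 + K2) = 0 := by
      field_simp
      ring
    rw [hz]
    have he : β / (2 * (1 + K2)) * (1 + K2) = β / 2 := by field_simp
    have hA1 : (A - 1) * (1 + K2) = β + K2 := by rw [hβ]; ring
    have hpos : 0 < (1 + β / (2 * (1 + K2))) * (2 + K2) - (A - 1) := by
      nlinarith [he, hA1, hα, hc, hβpos]
    norm_num
    nlinarith [mul_pos hK2 hpos]
end

section
/- Let A > 1, K_1, K_2 > 0, a_1 > 0, a_2 = A·a_1, and n, p nonnegative integers with p ≥ 1. Then the period formula for the type II bimodal solution with m = p, namely T = (a_1(1+K_1+K_2)+(a_2-a_1)(1-K_1))/(1-p(K_1-1)+n(1+K_1+K_2)), equals the period formula for the unimodal solution with m = p-1, namely T' = (a_1(1+K_1+K_2)+(a_2-a_1)K_2)/(1+pK_2+n(1+K_1+K_2)), when K_1 = L_{np-1} := (A-1)/(p-n(A-1)) - (1+K_2), provided p - n(A-1) > 0 and both denominators are nonzero. -/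
/-!
Write `S = 1 + K₁ + K₂` and `u = 1 - K₁ - K₂`. The choice `K₁ = L_{np-1}` says exactly that
`S (p - n (A - 1)) = A - 1`, which makes `a₁ (A - 1) / p` the unimodal period. The bimodal numerator
and denominator differ from the unimodal ones by `(a₂ - a₁) u` and `p u`, so the bimodal period
has the same value.
-/

theorem add_mul_div_add_mul_eq_div {x y c p u : ℝ} (hxy : p * x = c * y) (hy : y ≠ 0)
    (hyu : y + p * u ≠ 0) : (x + c * u) / (y + p * u) = x / y := by
  rw [div_eq_div_iff hyu hy]
  linear_combination -u * hxy

theorem one_add_add_mul_sub_eq_of_eq_div_sub {A K1 K2 D : ℝ} (hD : D ≠ 0)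
    (hK1 : K1 = (A - 1) / D - (1 + K2)) : (1 + K1 + K2) * D = A - 1 := by
  rw [hK1]
  field_simp
  ring

theorem unimodal_period_relation {a1 a2 A K1 K2 : ℝ} {n p : ℕ} (ha2 : a2 = A * a1)
    (hS : (1 + K1 + K2) * ((p : ℝ) - (n : ℝ) * (A - 1)) = A - 1) :
    (p : ℝ) * (a1 * (1 + K1 + K2) + (a2 - a1) * K2) =
      (a2 - a1) * (1 + (p : ℝ) * K2 + (n : ℝ) * (1 + K1 + K2)) := by
  rw [ha2]
  linear_combination a1 * hS

theorem stmt_13_general (a1 a2 A K1 K2 : ℝ) (n p : ℕ)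
    (ha2 : a2 = A * a1)
    (hpn : 0 < (p : ℝ) - (n : ℝ) * (A - 1))
    (hK1eq : K1 = (A - 1) / ((p : ℝ) - (n : ℝ) * (A - 1)) - (1 + K2))
    (hd1 : 1 - (p : ℝ) * (K1 - 1) + (n : ℝ) * (1 + K1 + K2) ≠ 0)
    (hd2 : 1 + (p : ℝ) * K2 + (n : ℝ) * (1 + K1 + K2) ≠ 0) :
    (a1 * (1 + K1 + K2) + (a2 - a1) * (1 - K1)) /
      (1 - (p : ℝ) * (K1 - 1) + (n : ℝ) * (1 + K1 + K2)) =
    (a1 * (1 + K1 + K2) + (a2 - a1) * K2) /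
      (1 + (p : ℝ) * K2 + (n : ℝ) * (1 + K1 + K2)) := by
  have hS := one_add_add_mul_sub_eq_of_eq_div_sub hpn.ne' hK1eq
  have hrel := unimodal_period_relation (n := n) (p := p) ha2 hS
  have hnum : a1 * (1 + K1 + K2) + (a2 - a1) * (1 - K1) =
      a1 * (1 + K1 + K2) + (a2 - a1) * K2 + (a2 - a1) * (1 - K1 - K2) := by ring
  have hden : 1 - (p : ℝ) * (K1 - 1) + (n : ℝ) * (1 + K1 + K2) =
      1 + (p : ℝ) * K2 + (n : ℝ) * (1 + K1 + K2) + p * (1 - K1 - K2) := by ring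
  rw [hden] at hd1 ⊢
  rw [hnum]
  exact add_mul_div_add_mul_eq_div hrel hd2 hd1

theorem stmt_13 (a1 a2 A K1 K2 : ℝ) (n p : ℕ)
    (hA : 1 < A) (hK1 : 0 < K1) (hK2 : 0 < K2)
    (ha1 : 0 < a1) (ha2 : a2 = A * a1) (hp : 1 ≤ p)
    (hpn : 0 < (p : ℝ) - (n : ℝ) * (A - 1))
    (hK1eq : K1 = (A - 1) / ((p : ℝ) - (n : ℝ) * (A - 1)) - (1 + K2))
    (hd1 : 1 - (p : ℝ) * (K1 - 1) + (n : ℝ) * (1 + K1 + K2) ≠ 0)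
    (hd2 : 1 + (p : ℝ) * K2 + (n : ℝ) * (1 + K1 + K2) ≠ 0) :
    (a1 * (1 + K1 + K2) + (a2 - a1) * (1 - K1)) /
      (1 - (p : ℝ) * (K1 - 1) + (n : ℝ) * (1 + K1 + K2)) =
    (a1 * (1 + K1 + K2) + (a2 - a1) * K2) /
      (1 + (p : ℝ) * K2 + (n : ℝ) * (1 + K1 + K2)) :=
  stmt_13_general a1 a2 A K1 K2 n p ha2 hpn hK1eq hd1 hd2
end

section
/- Let A > 1, K_2 ∈ (0,1), n ∈ ℕ, m ∈ ℕ with m - n(A-1) > 0 and K_1 = L_{nm-1} := (A-1)/(m-n(A-1)) - (1+K_2). Define T = (a_1(1+K_1+K_2)+(a_2-a_1)(1-K_1))/s(K_1) and T_2 = a_1·H_{nm}(K_1)/s(K_1), where s(K_1) = 1-m(K_1-1)+n(1+K_1+K_2) and H_{nm}(K) = [m-n(A-1)](K+K_2+1)(K+2K_2-1) - K[(A-1)(1+K_2)-K_2] + K_2(1+K_2) + (A-1)(1-K_2). Then, provided s(L_{nm-1}) ≠ 0, T_2 = K_2·T. -/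
/-! At `K = L_{nm-1}` one has `(K + K₂ + 1)(m - n(A - 1)) = A - 1`, which collapses the cubic
term of `H_{nm}(K)`; what remains is `K₂` times the numerator of `T / a₁`. -/

theorem add_add_one_mul_eq_of_eq_div_sub {K K₂ c D : ℝ} (hD : D ≠ 0)
    (hK : K = c / D - (1 + K₂)) : (K + K₂ + 1) * D = c := by
  rw [hK]
  field_simp
  ring

theorem H_eq_mul_of_add_add_one_mul_eq {R : Type*} [CommRing R] {A D K K₂ : R}
    (h : (K + K₂ + 1) * D = A - 1) :
    D * (K + K₂ + 1) * (K + 2 * K₂ - 1) - K * ((A - 1) * (1 + K₂) - K₂) + K₂ * (1 + K₂)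
      + (A - 1) * (1 - K₂) = K₂ * ((1 + K + K₂) + (A - 1) * (1 - K)) := by
  linear_combination (K + 2 * K₂ - 1) * h

theorem stmt_14_general (a1 a2 A K1 K2 : ℝ) (n m : ℕ)
    (ha2 : a2 = A * a1)
    (hmn : 0 < (m : ℝ) - (n : ℝ) * (A - 1))
    (hK1 : K1 = (A - 1) / ((m : ℝ) - (n : ℝ) * (A - 1)) - (1 + K2))
    (s H : ℝ → ℝ)
    (hH : ∀ K : ℝ, H K = ((m : ℝ) - (n : ℝ) * (A - 1)) * (K + K2 + 1) * (K + 2 * K2 - 1)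
      - K * ((A - 1) * (1 + K2) - K2) + K2 * (1 + K2) + (A - 1) * (1 - K2))
    (T T2 : ℝ)
    (hT : T = (a1 * (1 + K1 + K2) + (a2 - a1) * (1 - K1)) / s K1)
    (hT2 : T2 = a1 * H K1 / s K1) :
    T2 = K2 * T := by
  have hH1 : H K1 = K2 * ((1 + K1 + K2) + (A - 1) * (1 - K1)) :=
    (hH K1).trans <| H_eq_mul_of_add_add_one_mul_eq <|
      add_add_one_mul_eq_of_eq_div_sub hmn.ne' hK1
  rw [hT2, hT, hH1, ha2]
  ring

theorem stmt_14 (a1 a2 A K1 K2 : ℝ) (n m : ℕ)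
    (hA : 1 < A) (hK2 : 0 < K2) (hK2' : K2 < 1)
    (ha1 : 0 < a1) (ha2 : a2 = A * a1)
    (hmn : 0 < (m : ℝ) - (n : ℝ) * (A - 1))
    (hK1 : K1 = (A - 1) / ((m : ℝ) - (n : ℝ) * (A - 1)) - (1 + K2))
    (s H : ℝ → ℝ)
    (hs : ∀ K : ℝ, s K = 1 - (m : ℝ) * (K - 1) + (n : ℝ) * (1 + K + K2))
    (hH : ∀ K : ℝ, H K = ((m : ℝ) - (n : ℝ) * (A - 1)) * (K + K2 + 1) * (K + 2 * K2 - 1)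
      - K * ((A - 1) * (1 + K2) - K2) + K2 * (1 + K2) + (A - 1) * (1 - K2))
    (hsne : s K1 ≠ 0)
    (T T2 : ℝ)
    (hT : T = (a1 * (1 + K1 + K2) + (a2 - a1) * (1 - K1)) / s K1)
    (hT2 : T2 = a1 * H K1 / s K1) :
    T2 = K2 * T :=
  stmt_14_general a1 a2 A K1 K2 n m ha2 hmn hK1 s H hH T T2 hT hT2
end
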